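/- (Casimir invariant of the controlled string, Stokes–Dirac setting.) Let L > 0, ρ > 0 be constants and g : [0,L] → ℝ integrable; define Ψ₁(z) := −∫_zᴸ g(s) ds. Suppose q, p : ℝ × [0,L] → ℝ are continuously differentiable and satisfy ∂_t q(z,t) = ∂_z( p(z,t)/ρ ) for all (z,t) with boundary condition p(0,t) = 0 for all t, and the controller state v_c : ℝ → ℝ is differentiable with dv_c/dt = ∫₀ᴸ g(z) p(z,t)/ρ dz. Then the functional C(t) := v_c(t) + ∫₀ᴸ Ψ₁(z) q(z,t) dz is constant in t. -/

import Mathlib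

/-!
Differentiating under the integral sign and inserting the transport equation,
`d/dt ∫₀ᴸ Ψ₁ q dz = ∫₀ᴸ Ψ₁ ∂_z(p/ρ) dz`. Since `Ψ₁` is an absolutely continuous primitive of `g`
vanishing at `L`, and `p/ρ` vanishes at `0`, integration by parts turns this into
`-∫₀ᴸ g p/ρ dz`, which cancels the controller's velocity `v̇_c`.
-/

open MeasureTheory Set intervalIntegral
open scoped Interval

theorem integral_primitive_mul_deriv {g W : ℝ → ℝ} {a b : ℝ}
    (hg : IntervalIntegrable g volume a b) (hW : ContDiffOn ℝ 1 W (uIcc a b)) (hWa : W a = 0) :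
    ∫ z in a..b, (∫ s in b..z, g s) * deriv W z = -∫ z in a..b, g z * W z := by
  have hΨ := hg.absolutelyContinuousOnInterval_intervalIntegral (c := b) right_mem_uIcc
  have hderiv : ∀ᵐ z, z ∈ Ι a b → deriv (fun x => ∫ s in b..x, g s) z * W z = g z * W z := by
    filter_upwards [hg.ae_hasDerivAt_integral] with z hz hzab
    rw [(hz (uIoc_subset_uIcc hzab) b right_mem_uIcc).deriv]
  rw [hΨ.integral_mul_deriv_eq_deriv_mul hW.absolutelyContinuousOnInterval,
    integral_congr_ae hderiv, integral_same, hWa]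
  ring

theorem hasDerivAt_partial_fst {q : ℝ → ℝ → ℝ} (hq : Differentiable ℝ (Function.uncurry q))
    (t z : ℝ) :
    HasDerivAt (fun τ => q τ z) (fderiv ℝ (Function.uncurry q) (t, z) (1, 0)) t :=
  HasFDerivAt.comp_hasDerivAt (l := Function.uncurry q) t (hq (t, z)).hasFDerivAt
    ((hasDerivAt_id t).prodMk (hasDerivAt_const t z))

theorem hasDerivAt_integral_mul {φ : ℝ → ℝ} {q : ℝ → ℝ → ℝ} {a b : ℝ}
    (hφ : IntervalIntegrable φ volume a b) (hq : ContDiff ℝ 1 (Function.uncurry q)) (t₀ : ℝ) :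
    HasDerivAt (fun t => ∫ z in a..b, φ z * q t z)
      (∫ z in a..b, φ z * deriv (fun τ => q τ z) t₀) t₀ := by
  set qt : ℝ × ℝ → ℝ := fun x => fderiv ℝ (Function.uncurry q) x (1, 0)
  have hqd := hasDerivAt_partial_fst (hq.differentiable one_ne_zero)
  have hqt : Continuous qt := (hq.continuous_fderiv one_ne_zero).clm_apply continuous_const
  have hslice : ∀ t, Continuous fun z => q t z := fun t =>
    hq.continuous.comp (continuous_const.prodMk continuous_id)
  obtain ⟨M, hM⟩ := (isCompact_closedBall t₀ 1).prod isCompact_uIcc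
    |>.exists_bound_of_continuousOn hqt.continuousOn
  have hφm := hφ.def'.aestronglyMeasurable
  have key := hasDerivAt_integral_of_dominated_loc_of_deriv_le
    (F := fun t z => φ z * q t z) (F' := fun t z => φ z * qt (t, z))
    (bound := fun z => ‖φ z‖ * M) (Metric.ball_mem_nhds t₀ one_pos)
    (Filter.Eventually.of_forall fun t => hφm.mul (hslice t).aestronglyMeasurable)
    (hφ.mul_continuousOn (hslice t₀).continuousOn)
    (hφm.mul (hqt.comp (continuous_const.prodMk continuous_id)).aestronglyMeasurable)
    (ae_of_all _ fun z hz t ht => by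
      rw [norm_mul]
      exact mul_le_mul_of_nonneg_left
        (hM (t, z) ⟨Metric.ball_subset_closedBall ht, uIoc_subset_uIcc hz⟩) (norm_nonneg _))
    (hφ.norm.mul_const M)
    (ae_of_all _ fun z _ t _ => (hqd t z).const_mul (φ z))
  simpa only [(hqd t₀ _).deriv] using key.2

theorem stmt_13_general (L ρ : ℝ) (hL : 0 < L)
    (g : ℝ → ℝ) (hg : IntervalIntegrable g MeasureTheory.volume 0 L)
    (Ψ₁ : ℝ → ℝ) (hΨ₁ : ∀ z, Ψ₁ z = -∫ s in z..L, g s)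
    (q p : ℝ → ℝ → ℝ)              -- q t z : strain, p t z : momentum
    (hq : ContDiff ℝ 1 (Function.uncurry q))
    (hp : ContDiff ℝ 1 (Function.uncurry p))
    (hpde : ∀ t : ℝ, ∀ z ∈ Set.Icc (0 : ℝ) L,
      HasDerivAt (fun τ => q τ z) (deriv (fun ζ => p t ζ / ρ) z) t)
    (hbc0 : ∀ t : ℝ, p t 0 = 0)
    (vc : ℝ → ℝ)
    (hvc : ∀ t : ℝ, HasDerivAt vc (∫ z in (0 : ℝ)..L, g z * p t z / ρ) t)
    (C : ℝ → ℝ)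
    (hC : ∀ t, C t = vc t + ∫ z in (0 : ℝ)..L, Ψ₁ z * q t z) :
    ∀ t₁ t₂ : ℝ, C t₁ = C t₂ := by
  have hΨ : Ψ₁ = fun z => ∫ s in L..z, g s := funext fun z => by rw [hΨ₁, integral_symm, neg_neg]
  have hΨint : IntervalIntegrable Ψ₁ volume 0 L := by
    rw [hΨ]
    exact (hg.absolutelyContinuousOnInterval_intervalIntegral right_mem_uIcc).continuousOn
      |>.intervalIntegrable
  have hC_deriv : ∀ t, HasDerivAt C 0 t := by
    intro t
    have hW : ContDiff ℝ 1 fun ζ => p t ζ / ρ :=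
      (hp.comp (contDiff_const.prodMk contDiff_id)).div_const ρ
    have htransport : ∫ z in (0 : ℝ)..L, Ψ₁ z * deriv (fun τ => q τ z) t
        = ∫ z in (0 : ℝ)..L, Ψ₁ z * deriv (fun ζ => p t ζ / ρ) z :=
      integral_congr fun z hz => by
        rw [uIcc_of_le hL.le] at hz
        simp only [(hpde t z hz).deriv]
    have hparts : ∫ z in (0 : ℝ)..L, Ψ₁ z * deriv (fun ζ => p t ζ / ρ) z
        = -∫ z in (0 : ℝ)..L, g z * (p t z / ρ) := by
      simpa only [hΨ] using integral_primitive_mul_deriv hg hW.contDiffOn (by simp [hbc0])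
    have hsum := (hvc t).add (hasDerivAt_integral_mul hΨint hq t)
    simp only [htransport, hparts, mul_div_assoc, add_neg_cancel] at hsum
    rw [funext hC]
    exact hsum
  exact fun t₁ t₂ => is_const_of_deriv_eq_zero (fun t => (hC_deriv t).differentiableAt)
    (fun t => (hC_deriv t).deriv) t₁ t₂

/-- Casimir invariant of the controlled string (Stokes–Dirac setting): with
`Ψ₁(z) = −∫_zᴸ g(s) ds`, `∂_t q = ∂_z(p/ρ)`, `p(0,t) = 0` and controller
dynamics `v̇_c = ∫₀ᴸ g p/ρ dz`, the functional
`C(t) = v_c(t) + ∫₀ᴸ Ψ₁ q dz` is constant in time. -/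
theorem stmt_13 (L ρ : ℝ) (hL : 0 < L) (hρ : 0 < ρ)
    (g : ℝ → ℝ) (hg : IntervalIntegrable g MeasureTheory.volume 0 L)
    (Ψ₁ : ℝ → ℝ) (hΨ₁ : ∀ z, Ψ₁ z = -∫ s in z..L, g s)
    (q p : ℝ → ℝ → ℝ)              -- q t z : strain, p t z : momentum
    (hq : ContDiff ℝ 1 (Function.uncurry q))
    (hp : ContDiff ℝ 1 (Function.uncurry p))
    (hpde : ∀ t : ℝ, ∀ z ∈ Set.Icc (0 : ℝ) L,
      HasDerivAt (fun τ => q τ z) (deriv (fun ζ => p t ζ / ρ) z) t)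
    (hbc0 : ∀ t : ℝ, p t 0 = 0)
    (vc : ℝ → ℝ)
    (hvc : ∀ t : ℝ, HasDerivAt vc (∫ z in (0 : ℝ)..L, g z * p t z / ρ) t)
    (C : ℝ → ℝ)
    (hC : ∀ t, C t = vc t + ∫ z in (0 : ℝ)..L, Ψ₁ z * q t z) :
    ∀ t₁ t₂ : ℝ, C t₁ = C t₂ :=
  stmt_13_general L ρ hL g hg Ψ₁ hΨ₁ q p hq hp hpde hbc0 vc hvc C hC
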